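/- Suppose lim a_{n+1}/a_n = η with 1 < η < ∞. For any v̂ ∈ [1, η), if θ lies in [0, max{1, 1/(η−v̂)}) or in ((η^l − 1)/v̂, η^l) for some positive integer l, then the set {ξ : v̂_{b,A}(ξ) ≥ v̂ and v_{b,A}(ξ) = θv̂} is empty. -/

import Mathlib

/-!
Write `Λ_k = -log_b ‖b^k ξ‖`. For `s < t`, either the integer nearest to `b^t ξ` is `b^(t-s)` times
the one nearest to `b^s ξ`, and then `t + Λ_t = s + Λ_s`, or the two differ, and then
`s + Λ_s ≤ t + 1`. Pick `n` with `Λ_{a_n} ≈ v a_n`, where `v = θ v̂` is the asymptotic exponent,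
and let `N` be the first index with `a_N v̂ > Λ_{a_n}`; the uniform exponent gives `m ≤ N` with
`Λ_{a_m} > a_N v̂`. The dichotomy rules out `m ≤ n` and, for `m > n`, forces
`1 + v ≲ a_m / a_n ≲ η v / v̂`. Since `a_{k+1} / a_k → η`, the ratio `a_m / a_n` is close to a
power `η^j`, and `η^l - 1 < v < η^l v̂` says that no power of `η` lies in that window.
The first range of `θ` reduces to the second, `θ < 1` being excluded by `v̂ ≤ v`.
-/

open Filter MeasureTheory Set

/-- Distance to the nearest integer. -/
noncomputable def dni (x : ℝ) : ℝ := |x - round x|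

/-- Asymptotic approximation exponent `v_{b,A}(ξ)` (valued in `EReal`). -/
noncomputable def vbA (b : ℕ) (a : ℕ → ℕ) (ξ : ℝ) : EReal :=
  sSup ((fun v : ℝ => (v : EReal)) ''
    {v : ℝ | 0 ≤ v ∧ ∃ᶠ n in atTop, 1 ≤ n ∧
      dni ((b : ℝ) ^ (a n) * ξ) < (b : ℝ) ^ (-(a n : ℝ) * v)})

/-- Uniform approximation exponent `v̂_{b,A}(ξ)` (valued in `EReal`). -/
noncomputable def vhatbA (b : ℕ) (a : ℕ → ℕ) (ξ : ℝ) : EReal :=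
  sSup ((fun v : ℝ => (v : EReal)) ''
    {v : ℝ | 0 ≤ v ∧ ∀ᶠ N in atTop, ∃ n, 1 ≤ n ∧ n ≤ N ∧
      dni ((b : ℝ) ^ (a n) * ξ) < (b : ℝ) ^ (-(a N : ℝ) * v)})

open Topology

lemma dni_nonneg (x : ℝ) : 0 ≤ dni x := abs_nonneg _

lemma dni_le_half (x : ℝ) : dni x ≤ 1 / 2 := abs_sub_round x

lemma dni_natCast_mul_eq_or_one_le (c : ℕ) (x : ℝ) :
    dni (c * x) = c * dni x ∨ 1 ≤ c * dni x + dni (c * x) := by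
  unfold dni
  by_cases h : round ((c : ℝ) * x) = c * round x
  · left
    rw [h]
    push_cast
    rw [← mul_sub, abs_mul, Nat.abs_cast]
  · right
    calc (1 : ℝ) ≤ |((round ((c : ℝ) * x) - c * round x : ℤ) : ℝ)| := by
          exact_mod_cast Int.one_le_abs (sub_ne_zero.mpr h)
      _ = |c * (x - round x) - (c * x - round (c * x))| := by push_cast; ring_nf
      _ ≤ |c * (x - round x)| + |c * x - round (c * x)| := abs_sub _ _
      _ = c * |x - round x| + |c * x - round (c * x)| := by rw [abs_mul, Nat.abs_cast]

lemma dni_pow_mul_eq_or_half_le (b : ℕ) (ξ : ℝ) {s t : ℕ} (hst : s ≤ t) :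
    dni ((b : ℝ) ^ t * ξ) = (b : ℝ) ^ (t - s) * dni ((b : ℝ) ^ s * ξ) ∨
      1 / 2 ≤ (b : ℝ) ^ (t - s) * dni ((b : ℝ) ^ s * ξ) := by
  have e : (b : ℝ) ^ t * ξ = ((b ^ (t - s) : ℕ) : ℝ) * ((b : ℝ) ^ s * ξ) := by
    push_cast
    rw [← mul_assoc, ← pow_add, Nat.sub_add_cancel hst]
  rcases dni_natCast_mul_eq_or_one_le (b ^ (t - s)) ((b : ℝ) ^ s * ξ) with h | h <;>
    rw [← e] at h <;> push_cast at h
  · exact Or.inl h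
  · exact Or.inr (by linarith [dni_le_half ((b : ℝ) ^ t * ξ)])

/-- When `b ^ k * ξ ∈ ℤ` this is the junk value `-logb b 0 = 0`; every use assumes
`0 < dni (b ^ k * ξ)`. -/
noncomputable def approxPrecision (b : ℕ) (ξ : ℝ) (k : ℕ) : ℝ :=
  -Real.logb b (dni ((b : ℝ) ^ k * ξ))

section Precision

variable {b : ℕ} {ξ : ℝ}

lemma dni_lt_rpow_neg_iff (hb : 1 < b) {k : ℕ} (hd : 0 < dni ((b : ℝ) ^ k * ξ)) (y : ℝ) :
    dni ((b : ℝ) ^ k * ξ) < (b : ℝ) ^ (-y) ↔ y < approxPrecision b ξ k := by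
  rw [approxPrecision, ← Real.logb_lt_iff_lt_rpow (by exact_mod_cast hb) hd, lt_neg]

lemma add_approxPrecision_eq_or_le (hb : 2 ≤ b) {s t : ℕ} (hst : s ≤ t)
    (hs : 0 < dni ((b : ℝ) ^ s * ξ)) :
    (t : ℝ) + approxPrecision b ξ t = s + approxPrecision b ξ s ∨
      (s : ℝ) + approxPrecision b ξ s ≤ t + 1 := by
  have hb1 : (1 : ℝ) < b := by exact_mod_cast hb
  have hlog : Real.logb b ((b : ℝ) ^ (t - s) * dni ((b : ℝ) ^ s * ξ)) =
      t - s - approxPrecision b ξ s := by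
    rw [Real.logb_mul (pow_pos (by linarith) _).ne' hs.ne', Real.logb_pow,
      Real.logb_self_eq_one hb1, Nat.cast_sub hst, approxPrecision]
    ring
  rcases dni_pow_mul_eq_or_half_le b ξ hst with h | h
  · left
    rw [approxPrecision, h, hlog]
    ring
  · right
    have hhalf : -1 ≤ Real.logb b (1 / 2) := by
      rw [one_div, Real.logb_inv, neg_le_neg_iff, ← Real.logb_self_eq_one hb1]
      exact Real.logb_le_logb_of_le hb1 two_pos (by exact_mod_cast hb)
    linarith [hlog ▸ Real.logb_le_logb_of_le hb1 (by norm_num) h]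

end Precision

lemma vbA_nonneg (b : ℕ) (a : ℕ → ℕ) (ξ : ℝ) : 0 ≤ vbA b a ξ := by
  have h0 : (0 : ℝ) ∈ {v : ℝ | 0 ≤ v ∧ ∃ᶠ n in atTop, 1 ≤ n ∧
      dni ((b : ℝ) ^ (a n) * ξ) < (b : ℝ) ^ (-(a n : ℝ) * v)} :=
    ⟨le_rfl, (eventually_ge_atTop 1).frequently.mono fun n hn =>
      ⟨hn, by rw [mul_zero, Real.rpow_zero]; linarith [dni_le_half ((b : ℝ) ^ (a n) * ξ)]⟩⟩
  rw [← EReal.coe_zero]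
  exact le_sSup (mem_image_of_mem _ h0)

section Exponents

variable {b : ℕ} {a : ℕ → ℕ} {ξ : ℝ}

/-- Once some `b ^ (a n) * ξ` is an integer, so are all later ones, and then `vbA b a ξ = ⊤`. -/
lemma dni_pos_of_vbA_eq_coe (hb : 0 < b) (ha : Monotone a) {v : ℝ} (h : vbA b a ξ = v)
    (n : ℕ) : 0 < dni ((b : ℝ) ^ (a n) * ξ) := by
  refine (dni_nonneg _).lt_of_ne' fun h0 => ?_
  have hzero : ∀ m ≥ n, dni ((b : ℝ) ^ (a m) * ξ) = 0 := fun m hm => by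
    rcases dni_pow_mul_eq_or_half_le b ξ (ha hm) with h | h <;> rw [h0, mul_zero] at h
    · exact h
    · norm_num at h
  have hle : ∀ u : ℝ, 0 ≤ u → (u : EReal) ≤ vbA b a ξ := fun u hu =>
    le_sSup (mem_image_of_mem _ ⟨hu, (eventually_ge_atTop (max n 1)).frequently.mono
      fun m hm => ⟨le_of_max_le_right hm, by
        rw [hzero m (le_of_max_le_left hm)]; exact Real.rpow_pos_of_pos (by exact_mod_cast hb) _⟩⟩)
  have := hle (|v| + 1) (by positivity)
  rw [h, EReal.coe_le_coe_iff] at this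
  linarith [le_abs_self v]

lemma eventually_approxPrecision_le (hb : 1 < b) (hd : ∀ n, 0 < dni ((b : ℝ) ^ (a n) * ξ))
    {u : ℝ} (h : vbA b a ξ < u) :
    ∀ᶠ n in atTop, approxPrecision b ξ (a n) ≤ a n * u := by
  have hu : 0 ≤ u := EReal.coe_nonneg.mp ((vbA_nonneg b a ξ).trans h.le)
  by_contra hc
  refine h.not_ge (le_sSup (mem_image_of_mem _ ⟨hu, ?_⟩))
  refine ((not_eventually.mp hc).and_eventually (eventually_ge_atTop 1)).mono
    fun n hn => ⟨hn.2, ?_⟩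
  rw [neg_mul, dni_lt_rpow_neg_iff hb (hd n)]
  exact not_le.mp hn.1

lemma frequently_lt_approxPrecision (hb : 1 < b) (hd : ∀ n, 0 < dni ((b : ℝ) ^ (a n) * ξ))
    {u : ℝ} (h : (u : EReal) < vbA b a ξ) :
    ∃ᶠ n in atTop, a n * u < approxPrecision b ξ (a n) := by
  obtain ⟨_, ⟨u', hu', rfl⟩, huu'⟩ := lt_sSup_iff.mp h
  refine hu'.2.mono fun n hn => ?_
  rw [neg_mul, dni_lt_rpow_neg_iff hb (hd n)] at hn
  exact (mul_le_mul_of_nonneg_left (EReal.coe_le_coe_iff.mp huu'.le) (Nat.cast_nonneg _)).trans_lt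
    hn.2

lemma eventually_exists_lt_approxPrecision (hb : 1 < b) (hd : ∀ n, 0 < dni ((b : ℝ) ^ (a n) * ξ))
    {u : ℝ} (h : (u : EReal) < vhatbA b a ξ) :
    ∀ᶠ N in atTop, ∃ n ≤ N, a N * u < approxPrecision b ξ (a n) := by
  obtain ⟨_, ⟨u', hu', rfl⟩, huu'⟩ := lt_sSup_iff.mp h
  refine hu'.2.mono fun N ⟨n, _, hnN, hn⟩ => ⟨n, hnN, ?_⟩
  rw [neg_mul, dni_lt_rpow_neg_iff hb (hd n)] at hn
  exact (mul_le_mul_of_nonneg_left (EReal.coe_le_coe_iff.mp huu'.le) (Nat.cast_nonneg _)).trans_lt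
    hn

end Exponents

lemma exists_pow_sub_one_lt_lt_pow_mul {η v w : ℝ} (hη : 1 < η) (hw : 0 < w) (hwv : w ≤ v)
    (h : v * (η - w) < w) : ∃ l : ℕ, η ^ l - 1 < v ∧ v < η ^ l * w := by
  obtain ⟨k, hk, hk1⟩ := exists_nat_pow_near ((one_le_div hw).mpr hwv) hη
  rw [le_div_iff₀ hw] at hk
  rw [div_lt_iff₀ hw] at hk1
  refine ⟨k + 1, ?_, hk1⟩
  have : η ^ (k + 1) * w ≤ η * v := by
    rw [pow_succ']
    nlinarith
  nlinarith

lemma exists_margin {η v w : ℝ} {l : ℕ} (hη : 1 < η) (hc1 : η ^ l - 1 < v)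
    (hc2 : v < η ^ l * w) :
    ∃ ε > 0, 1 ≤ η - ε ∧ 0 < w - ε ∧ 1 + v + ε < (η - ε) * (1 + v - ε) ∧
      (η + ε) ^ l + 2 * ε < 1 + v ∧ (η + ε) * (v + 2 * ε) < (η - ε) ^ (l + 1) * (w - ε) := by
  have hηl : 1 ≤ η ^ l := one_le_pow₀ hη.le
  have hw : 0 < w := pos_of_mul_pos_right (by linarith) (by linarith : (0 : ℝ) ≤ η ^ l)
  have h1 : ∀ᶠ ε in 𝓝 (0 : ℝ), ε < η - 1 := eventually_lt_nhds (by linarith)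
  have h2 : ∀ᶠ ε in 𝓝 (0 : ℝ), ε < w := eventually_lt_nhds hw
  have h3 : ∀ᶠ ε in 𝓝 (0 : ℝ), 1 + v + ε < (η - ε) * (1 + v - ε) :=
    ContinuousAt.eventually_lt (by fun_prop) (by fun_prop) (by nlinarith)
  have h4 : ∀ᶠ ε in 𝓝 (0 : ℝ), (η + ε) ^ l + 2 * ε < 1 + v :=
    ContinuousAt.eventually_lt (by fun_prop) (by fun_prop) (by
      simp only [add_zero, mul_zero]; linarith)
  have h5 : ∀ᶠ ε in 𝓝 (0 : ℝ), (η + ε) * (v + 2 * ε) < (η - ε) ^ (l + 1) * (w - ε) :=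
    ContinuousAt.eventually_lt (by fun_prop) (by fun_prop) (by
      simp only [add_zero, sub_zero, mul_zero]; rw [pow_succ]; nlinarith)
  obtain ⟨ε, ⟨e1, e2, e3, e4, e5⟩, hε⟩ := (((h1.and (h2.and (h3.and (h4.and h5)))).filter_mono
    nhdsWithin_le_nhds).and (eventually_mem_nhdsWithin (s := Ioi 0))).exists
  exact ⟨ε, hε, by linarith, by linarith, e3, e4, e5⟩

section Sequences

variable {A Λ : ℕ → ℝ}

lemma exists_le_lt_succ {f : ℕ → ℝ} (hf : Tendsto f atTop atTop) {k : ℕ} {X : ℝ}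
    (hk : f k ≤ X) : ∃ N, k ≤ N ∧ f N ≤ X ∧ X < f (N + 1) := by
  by_contra! h
  have hle : ∀ N, k ≤ N → f N ≤ X := fun N hN => Nat.le_induction hk h N hN
  obtain ⟨N, hXN, hkN⟩ := ((hf.eventually_gt_atTop X).and (eventually_ge_atTop k)).exists
  exact (hle N hkN).not_gt hXN

lemma frequently_mul_lt_of_eventually_exists (hA : Monotone A) (hAtop : Tendsto A atTop atTop)
    {u : ℝ} (hu : 0 < u) (h : ∀ᶠ N in atTop, ∃ n ≤ N, A N * u < Λ n) :
    ∃ᶠ n in atTop, A n * u < Λ n := by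
  refine frequently_atTop.mpr fun M => ?_
  obtain ⟨C, hC⟩ := ((finite_Iio M).image Λ).bddAbove
  obtain ⟨N, ⟨n, hnN, hn⟩, hCN⟩ := (h.and (hAtop.eventually_gt_atTop (C / u))).exists
  have hMn : M ≤ n := by
    by_contra! hnM
    have := hC (mem_image_of_mem Λ hnM)
    rw [div_lt_iff₀ hu] at hCN
    linarith
  exact ⟨n, hMn, (mul_le_mul_of_nonneg_right (hA hnN) hu.le).trans_lt hn⟩

lemma le_of_eventually_exists_mul_lt (hA : Monotone A) (hAtop : Tendsto A atTop atTop)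
    {v w : ℝ} (hw : 0 < w) (hunif : ∀ u < w, ∀ᶠ N in atTop, ∃ n ≤ N, A N * u < Λ n)
    (hup : ∀ u, v < u → ∀ᶠ n in atTop, Λ n ≤ A n * u) : w ≤ v := by
  by_contra! hvw
  obtain ⟨u, hvu, huw⟩ := exists_between (max_lt hvw hw)
  obtain ⟨n, hlt, hle⟩ := ((frequently_mul_lt_of_eventually_exists hA hAtop
    ((le_max_right v 0).trans_lt hvu) (hunif u huw)).and_eventually
    (hup u ((le_max_left v 0).trans_lt hvu))).exists
  linarith

lemma eventually_mul_le_succ_le_mul {η ε : ℝ} (hA : ∀ᶠ n in atTop, 0 < A n)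
    (hη : Tendsto (fun n => A (n + 1) / A n) atTop (𝓝 η)) (hε : 0 < ε) :
    ∀ᶠ k in atTop, (η - ε) * A k ≤ A (k + 1) ∧ A (k + 1) ≤ (η + ε) * A k := by
  filter_upwards [hA, hη.eventually (eventually_gt_nhds (by linarith : η - ε < η)),
    hη.eventually (eventually_lt_nhds (by linarith : η < η + ε))] with k hk hlo hhi
  exact ⟨((lt_div_iff₀ hk).mp hlo).le, ((div_lt_iff₀ hk).mp hhi).le⟩

lemma le_pow_mul_or_pow_mul_le {c C : ℝ} {M : ℕ} (hc : 1 ≤ c) (hC : 1 ≤ C)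
    (hA : ∀ k, 0 ≤ A k) (h : ∀ k ≥ M, c * A k ≤ A (k + 1) ∧ A (k + 1) ≤ C * A k)
    {k m : ℕ} (hk : M ≤ k) (hkm : k ≤ m) (l : ℕ) :
    A m ≤ C ^ l * A k ∨ c ^ (l + 1) * A k ≤ A m := by
  obtain ⟨j, rfl⟩ := Nat.exists_eq_add_of_le hkm
  rcases le_or_gt j l with hj | hj
  · left
    calc A (k + j) ≤ C ^ j * A k :=
          le_geom (u := fun i => A (k + i)) (by linarith) j fun i _ => (h (k + i) (by omega)).2
      _ ≤ C ^ l * A k := mul_le_mul_of_nonneg_right (pow_le_pow_right₀ hC hj) (hA k)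
  · right
    calc c ^ (l + 1) * A k ≤ c ^ j * A k :=
          mul_le_mul_of_nonneg_right (pow_le_pow_right₀ hc hj) (hA k)
      _ ≤ A (k + j) :=
          geom_le (u := fun i => A (k + i)) (by linarith) j fun i _ => (h (k + i) (by omega)).1

lemma not_frequently_mul_lt_of_linked {η v w ε : ℝ} {l : ℕ}
    (hA0 : ∀ n, 0 ≤ A n) (hA : Monotone A) (hAtop : Tendsto A atTop atTop)
    (hratio : ∀ᶠ k in atTop, (η - ε) * A k ≤ A (k + 1) ∧ A (k + 1) ≤ (η + ε) * A k)
    (hlink : ∀ s t, s < t → A t + Λ t = A s + Λ s ∨ A s + Λ s ≤ A t + 1)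
    (hunif : ∀ᶠ N in atTop, ∃ m ≤ N, A N * (w - ε) < Λ m)
    (hup : ∀ᶠ n in atTop, Λ n ≤ A n * (v + ε))
    (hε : 0 < ε) (hηε : 1 ≤ η - ε) (hwε : 0 < w - ε) (hwv : w ≤ v) (hv : 1 ≤ v)
    (h3 : 1 + v + ε < (η - ε) * (1 + v - ε)) (h4 : (η + ε) ^ l + 2 * ε < 1 + v)
    (h5 : (η + ε) * (v + 2 * ε) < (η - ε) ^ (l + 1) * (w - ε)) :
    ¬ ∃ᶠ n in atTop, A n * (v - ε) < Λ n := by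
  intro hfreq
  obtain ⟨M, hM⟩ := eventually_atTop.mp hratio
  obtain ⟨M₁, hM₁⟩ := eventually_atTop.mp hunif
  obtain ⟨M₂, hM₂⟩ := eventually_atTop.mp hup
  obtain ⟨C, hC⟩ := ((finite_Iio M₂).image Λ).bddAbove
  obtain ⟨n, hn, hnM, hnM₁, hnM₂, hεn, hCn⟩ := (hfreq.and_eventually
    ((eventually_ge_atTop (M + 1)).and ((eventually_ge_atTop M₁).and ((eventually_ge_atTop M₂).and
      ((hAtop.eventually_ge_atTop (1 / ε)).and (hAtop.eventually_ge_atTop C)))))).exists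
  obtain ⟨N, hnN, hN, hN1⟩ := exists_le_lt_succ (hAtop.atTop_mul_const hwε) (k := n)
    (X := A n * (v + ε) + 1) (by nlinarith [hA0 n])
  obtain ⟨m, hmN, hm⟩ := hM₁ (N + 1) (by omega)
  have hΛn := hM₂ n hnM₂
  have hΛm : A n * (v + ε) + 1 < Λ m := by linarith
  have hAn : 1 ≤ A n * ε := by rwa [div_le_iff₀ hε] at hεn
  have hAn0 : 0 < A n := by nlinarith [hA0 n]
  rcases lt_trichotomy m n with hmn | rfl | hnm
  · have hΛm' : Λ m ≤ A m * (v + ε) := by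
      refine hM₂ m (not_lt.mp fun hm₂ => ?_)
      have := hC (mem_image_of_mem Λ hm₂)
      nlinarith
    have hAmn : (η - ε) * A m ≤ A n := by
      obtain ⟨n', rfl⟩ : ∃ n', n = n' + 1 := ⟨n - 1, by omega⟩
      exact (mul_le_mul_of_nonneg_left (hA (by omega : m ≤ n')) (by linarith)).trans
        (hM n' (by omega)).1
    rcases hlink m n hmn with h | h
    · nlinarith [hA0 m, hA0 n, mul_le_mul_of_nonneg_left h3.le (hA0 m)]
    · nlinarith [hA0 m, hA0 n]
  · linarith
  · have hsep : A n * (1 + v - 2 * ε) ≤ A m := by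
      rcases hlink n m hnm with h | h
      · linarith [hA hnm.le]
      · nlinarith
    have hAm : A m * (w - ε) ≤ (η + ε) * (A n * (v + 2 * ε)) :=
      calc A m * (w - ε) ≤ A (N + 1) * (w - ε) := mul_le_mul_of_nonneg_right (hA hmN) hwε.le
        _ ≤ (η + ε) * (A N * (w - ε)) := by nlinarith [(hM N (by omega)).2]
        _ ≤ (η + ε) * (A n * (v + 2 * ε)) := mul_le_mul_of_nonneg_left (by linarith) (by linarith)
    rcases le_pow_mul_or_pow_mul_le hηε (by linarith) hA0 hM (by omega : M ≤ n) hnm.le l with h | h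
    · nlinarith
    · nlinarith [mul_le_mul_of_nonneg_right h hwε.le, mul_lt_mul_of_pos_right h5 hAn0]

end Sequences

theorem stmt10_general (b : ℕ) (hb : 2 ≤ b) (a : ℕ → ℕ) (ha : StrictMono a)
    (η : ℝ) (hη1 : 1 < η)
    (hη : Tendsto (fun n => (a (n + 1) : ℝ) / (a n : ℝ)) atTop (nhds η))
    (w : ℝ) (hw : w ∈ Set.Ico (1 : ℝ) η) (θ : ℝ)
    (hθ : θ ∈ Set.Ico 0 (max 1 (1 / (η - w))) ∨
      ∃ l : ℕ, 1 ≤ l ∧ θ ∈ Set.Ioo ((η ^ l - 1) / w) (η ^ l)) :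
    {ξ : ℝ | (w : EReal) ≤ vhatbA b a ξ ∧ vbA b a ξ = ((θ * w : ℝ) : EReal)} = ∅ := by
  refine eq_empty_iff_forall_notMem.mpr fun ξ ⟨hvhat, hv⟩ => ?_
  obtain ⟨hw1, hwη⟩ := hw
  have hd := dni_pos_of_vbA_eq_coe (by omega) ha.monotone hv
  have hA : Monotone fun n => (a n : ℝ) := fun m n h => Nat.cast_le.mpr (ha.monotone h)
  have hAtop : Tendsto (fun n => (a n : ℝ)) atTop atTop :=
    tendsto_natCast_atTop_atTop.comp ha.tendsto_atTop
  have hunif (u : ℝ) (hu : u < w) := eventually_exists_lt_approxPrecision (by omega) hd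
    (hvhat.trans_lt' (EReal.coe_lt_coe_iff.mpr hu))
  have hup (u : ℝ) (hu : θ * w < u) := eventually_approxPrecision_le (by omega) hd
    (hv ▸ EReal.coe_lt_coe_iff.mpr hu)
  have hwv : w ≤ θ * w := le_of_eventually_exists_mul_lt hA hAtop (by linarith) hunif hup
  obtain ⟨l, hc1, hc2⟩ : ∃ l : ℕ, η ^ l - 1 < θ * w ∧ θ * w < η ^ l * w := by
    rcases hθ with ⟨-, hθ⟩ | ⟨l, -, hlo, hhi⟩
    · rcases lt_max_iff.mp hθ with h | h
      · nlinarith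
      · refine exists_pow_sub_one_lt_lt_pow_mul hη1 (by linarith) hwv ?_
        nlinarith [(lt_div_iff₀ (by linarith : 0 < η - w)).mp h]
    · exact ⟨l, by rwa [div_lt_iff₀ (by linarith)] at hlo, by nlinarith⟩
  obtain ⟨ε, hε, hηε, hwε, h3, h4, h5⟩ := exists_margin hη1 hc1 hc2
  refine not_frequently_mul_lt_of_linked (fun n => Nat.cast_nonneg _) hA hAtop
    (eventually_mul_le_succ_le_mul (hAtop.eventually_gt_atTop 0) hη hε)
    (fun s t hst => add_approxPrecision_eq_or_le hb (ha hst).le (hd s))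
    (hunif _ (by linarith)) (hup _ (by linarith)) hε hηε hwε hwv (by linarith) h3 h4 h5
    (frequently_lt_approxPrecision (by omega) hd ?_)
  rw [hv]
  exact EReal.coe_lt_coe_iff.mpr (by linarith)

theorem stmt10 (b : ℕ) (hb : 2 ≤ b) (a : ℕ → ℕ) (ha : StrictMono a)
    (hpos : ∀ n, 1 ≤ a n) (η : ℝ) (hη1 : 1 < η)
    (hη : Tendsto (fun n => (a (n + 1) : ℝ) / (a n : ℝ)) atTop (nhds η))
    (w : ℝ) (hw : w ∈ Set.Ico (1 : ℝ) η) (θ : ℝ)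
    (hθ : θ ∈ Set.Ico 0 (max 1 (1 / (η - w))) ∨
      ∃ l : ℕ, 1 ≤ l ∧ θ ∈ Set.Ioo ((η ^ l - 1) / w) (η ^ l)) :
    {ξ : ℝ | (w : EReal) ≤ vhatbA b a ξ ∧ vbA b a ξ = ((θ * w : ℝ) : EReal)} = ∅ :=
  stmt10_general b hb a ha η hη1 hη w hw θ hθ
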